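/- arXiv:1801.09505 — 8 statements merged into one kernel-verified Lean document; each statement's English description precedes it below -/
import Mathlib

section
/- Let F(X) be the free group on a set X, let Y ⊆ X, and let w ∈ F(X) be an element whose reduced word uses a generator from X \ Y. Let t be a symbol not in X. Then the map sending t to w and each y ∈ Y to itself extends to a group isomorphism from the free group F({t} ∪ Y) onto the subgroup of F(X) generated by {w} ∪ Y. -/
/-!
Strip from the reduced word of `w` its longest prefix and suffix of letters in `Y`: then
`w = p * g * q` with `p, q ∈ ⟨Y⟩` and the reduced word of `g` beginning and ending with letters
outside `Y`. Replacing `t` by `p⁻¹ t q⁻¹` is a change of basis of `F({t} ∪ Y)`, so it suffices to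
treat `g`. Write the reduced word of `g` as `R V R⁻¹` with `V` cyclically reduced and play
ping-pong on `F(X)` acting on itself: `g^{±1}` maps the words not starting with `R` followed by
the first letter of `V^{∓1}` to words starting with `R` followed by the first letter of `V^{±1}`,
and `y^{±1}` maps the words not starting with `y^{∓1}` to words starting with `y^{±1}`. These
`2|Y| + 2` cones are pairwise disjoint because `V` is cyclically reduced and the first letters
of `R V` and `R V⁻¹` lie outside `Y`. When `Y` is empty there is only one generator, and
torsion-freeness of `F(X)` replaces ping-pong.
-/

theorem List.IsPrefix.head?_eq {α : Type*} {l₁ l₂ : List α} (h : l₁ <+: l₂) (hne : l₁ ≠ []) :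
    l₁.head? = l₂.head? := by
  obtain ⟨t, rfl⟩ := h
  cases l₁ with
  | nil => exact absurd rfl hne
  | cons a l => rfl

theorem List.exists_eq_append_append_of_exists_not {α : Type*} (p : α → Bool) {L : List α}
    (h : ∃ a ∈ L, p a = false) :
    ∃ P M S, L = P ++ M ++ S ∧ (∀ a ∈ P, p a) ∧ (∀ a ∈ S, p a) ∧ M ≠ [] ∧
      (∀ a ∈ M.head?, p a = false) ∧ ∀ a ∈ M.getLast?, p a = false := by
  set M := (L.dropWhile p).rdropWhile p
  have hM : M ≠ [] := by
    rw [Ne, rdropWhile_eq_nil_iff]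
    obtain ⟨a, ha, hpa⟩ := h
    rw [← takeWhile_append_dropWhile (p := p) (l := L), mem_append] at ha
    rcases ha with ha | ha
    · simp [mem_takeWhile_imp ha] at hpa
    · exact fun hall => by simp [hall a ha] at hpa
  refine ⟨L.takeWhile p, M, (L.dropWhile p).rtakeWhile p, ?_, fun a => mem_takeWhile_imp,
    fun a => mem_rtakeWhile_imp, hM, ?_, ?_⟩
  · rw [append_assoc, rdropWhile_append_rtakeWhile, takeWhile_append_dropWhile]
  · have hpre : M <+: L.dropWhile p := rdropWhile_prefix p _
    have hne : L.dropWhile p ≠ [] := ne_nil_of_mem (hpre.subset (head_mem hM))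
    rw [hpre.head?_eq hM, head?_eq_some_head hne]
    rintro a ⟨⟩
    exact head_dropWhile_not p hne
  · rw [getLast?_eq_some_getLast hM]
    rintro a ⟨⟩
    simpa using rdropWhile_last_not p _ hM

namespace FreeGroup

open List

universe u

section

variable {α : Type u} {R V : List (α × Bool)}

theorem take_one_invRev_of_getLast? {a : α × Bool} (h : V.getLast? = some a) :
    (invRev V).take 1 = [(a.1, !a.2)] := by
  obtain ⟨V', rfl⟩ := getLast?_eq_some_iff.mp h
  simp [invRev]

theorem take_one_ne_take_one_invRev (hV : IsCyclicallyReduced V) (hne : V ≠ []) :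
    V.take 1 ≠ (invRev V).take 1 := by
  obtain ⟨l, hl⟩ := Option.ne_none_iff_exists'.mp (mt getLast?_eq_none_iff.mp hne)
  rw [take_one_invRev_of_getLast? hl, take_one, head?_eq_some_head hne]
  intro h
  simp only [Option.toList_some, cons.injEq, and_true] at h
  have := hV.2 l hl _ (head?_eq_some_head hne) (by rw [h])
  rw [h] at this
  simp at this

theorem eq_nil_of_isReduced_append_invRev (h : IsReduced (R ++ invRev R)) : R = [] := by
  rcases eq_nil_or_concat R with hR | ⟨R', r, rfl⟩
  · exact hR
  · have : IsReduced [r, (r.1, !r.2)] := h.infix ⟨R', invRev R', by simp [invRev]⟩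
    simp [IsReduced] at this

theorem invRev_append_append_invRev (R V : List (α × Bool)) :
    invRev (R ++ V ++ invRev R) = R ++ invRev V ++ invRev R := by
  rw [invRev_append, invRev_append, invRev_invRev, append_assoc]

/-- The ping-pong sets for the generator `mk (R ++ V ++ invRev R)` and its inverse consist of the
elements whose reduced word starts with `pingPongPrefix R V true`, resp. `pingPongPrefix R V false`. -/
def pingPongPrefix (R V : List (α × Bool)) (b : Bool) : List (α × Bool) :=
  R ++ (bif b then V else invRev V).take 1

theorem pingPongPrefix_ne_nil (hV : V ≠ []) (b : Bool) : pingPongPrefix R V b ≠ [] := by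
  cases b <;> simp [pingPongPrefix, hV, invRev]

theorem pairwise_not_prefix_option_elim {Y : Set α} (hV : IsCyclicallyReduced V) (hne : V ≠ [])
    (hY : ∀ b, ∀ a ∈ (pingPongPrefix R V b).head?, a.1 ∉ Y) :
    Pairwise fun p q : Option Y × Bool =>
      ¬ pingPongPrefix (p.1.elim R fun _ => []) (p.1.elim V fun y => [((y : α), true)]) p.2 <+:
        pingPongPrefix (q.1.elim R fun _ => []) (q.1.elim V fun y => [((y : α), true)]) q.2 := by
  have hsome (y : Y) (b : Bool) : pingPongPrefix [] [((y : α), true)] b = [((y : α), b)] := by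
    cases b <;> rfl
  rintro ⟨_ | y, b⟩ ⟨_ | y', c⟩ hbc hpre <;>
    simp only [Option.elim_none, Option.elim_some, hsome] at hpre
  · have hlen : (pingPongPrefix R V b).length = (pingPongPrefix R V c).length := by
      cases b <;> cases c <;> simp [pingPongPrefix, invRev]
    have := append_cancel_left (hpre.eq_of_length hlen)
    cases b <;> cases c <;> simp at hbc
    · exact take_one_ne_take_one_invRev hV hne this.symm
    · exact take_one_ne_take_one_invRev hV hne this
  · exact hY b _ (by rw [hpre.head?_eq (pingPongPrefix_ne_nil hne b)]; rfl) y'.2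
  · exact hY c _ (singleton_prefix_iff_head?_eq_some.mp hpre) y.2
  · have := singleton_prefix_iff_head?_eq_some.mp hpre
    simp only [head?_cons, Option.some.injEq, Prod.mk.injEq] at this
    obtain ⟨hy, rfl⟩ := this
    exact hbc (by rw [Subtype.ext hy])

theorem lift_map_apply {β γ : Type*} [Group γ] (f : α → β) (b : β → γ) (u : FreeGroup α) :
    lift b (map f u) = lift (b ∘ f) u := by
  induction u using FreeGroup.induction_on <;> simp_all

theorem injective_lift_of_subsingleton {ι G : Type*} [Group G] [IsMulTorsionFree G]
    [Subsingleton ι] {a : ι → G} (ha : ∀ i, a i ≠ 1) : Function.Injective (lift a) := by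
  rw [injective_iff_map_eq_one]
  intro u hu
  have hu_mem : u ∈ Subgroup.closure (Set.range (of : ι → FreeGroup ι)) :=
    closure_range_of ι ▸ Subgroup.mem_top u
  rcases isEmpty_or_nonempty ι with hι | ⟨⟨i⟩⟩
  · rwa [Set.range_eq_empty, Subgroup.closure_empty, Subgroup.mem_bot] at hu_mem
  · have : Nonempty ι := ⟨i⟩
    have hof : (of : ι → FreeGroup ι) = fun _ => of i :=
      funext fun j => by rw [Subsingleton.elim j i]
    rw [hof, Set.range_const, Subgroup.mem_closure_singleton] at hu_mem
    obtain ⟨n, rfl⟩ := hu_mem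
    rw [map_zpow, lift_apply_of, IsMulTorsionFree.zpow_eq_one_iff_right (ha i)] at hu
    rw [hu, zpow_zero]

theorem injective_lift_of_injective_lift_mul_mul {ι G : Type*} [Group G] {a : Option ι → G}
    {h h' : G} (hh : h ∈ Subgroup.closure (Set.range (a ∘ some)))
    (hh' : h' ∈ Subgroup.closure (Set.range (a ∘ some)))
    (hinj : Function.Injective (lift fun o : Option ι => o.elim (h * a none * h') (a ∘ some))) :
    Function.Injective (lift a) := by
  rw [← range_lift_eq_closure] at hh hh'
  obtain ⟨η, rfl⟩ := hh
  obtain ⟨η', rfl⟩ := hh'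
  set j : FreeGroup ι →* FreeGroup (Option ι) := map some
  let A : FreeGroup (Option ι) →* FreeGroup (Option ι) :=
    lift fun o : Option ι => o.elim (j η * of none * j η') (of ∘ some)
  let B : FreeGroup (Option ι) →* FreeGroup (Option ι) :=
    lift fun o : Option ι => o.elim ((j η)⁻¹ * of none * (j η')⁻¹) (of ∘ some)
  have hAj (u : FreeGroup ι) : A (j u) = j u := by
    induction u using FreeGroup.induction_on <;> simp_all [A, j]
  have hAB : Function.LeftInverse A B := by
    refine DFunLike.congr_fun (f := A.comp B) (g := MonoidHom.id _) (ext_hom _ _ ?_)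
    rintro (_ | i)
    · simp [A, B, hAj]
      group
    · simp [A, B]
  have hfac : lift a = (lift fun o : Option ι => o.elim
      (lift (a ∘ some) η * a none * lift (a ∘ some) η') (a ∘ some)).comp B := by
    refine ext_hom _ _ ?_
    rintro (_ | i)
    · simp [B, j, lift_map_apply, Function.comp_def]
      group
    · simp [B]
  rw [hfac, MonoidHom.coe_comp]
  exact hinj.comp hAB.injective

theorem mk_mem_closure_of_forall_mem {Y : Set α} :
    ∀ {L : List (α × Bool)}, (∀ a ∈ L, a.1 ∈ Y) → mk L ∈ Subgroup.closure (of '' Y)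
  | [], _ => Subgroup.one_mem _
  | (x, b) :: L, hL => by
    have hx : of x ∈ Subgroup.closure (of '' Y) :=
      Subgroup.subset_closure ⟨x, hL _ mem_cons_self, rfl⟩
    rw [← singleton_append, ← mul_mk]
    refine Subgroup.mul_mem _ ?_
      (mk_mem_closure_of_forall_mem fun a ha => hL a (mem_cons_of_mem _ ha))
    cases b
    · exact (show (of x)⁻¹ = mk [(x, false)] by simp [of, inv_mk, invRev]) ▸
        Subgroup.inv_mem _ hx
    · exact hx

end

variable {α : Type u} [DecidableEq α] {L R V : List (α × Bool)}

theorem IsReduced.invRev (h : IsReduced L) : IsReduced (invRev L) :=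
  isReduced_iff_reduce_eq.mpr (by rw [reduce_invRev, h.reduce_eq])

theorem toWord_mk_mul_of_isReduced {g : FreeGroup α} (h : IsReduced (L ++ g.toWord)) :
    (mk L * g).toWord = L ++ g.toWord := by
  rw [← mk_toWord (x := g), mul_mk, toWord_mk, h.reduce_eq, mk_toWord]

theorem prefix_toWord_mk_mul (hred : IsReduced (R ++ V ++ invRev R)) (hV : V ≠ [])
    {g : FreeGroup α} (hg : ¬ R ++ (invRev V).take 1 <+: g.toWord) :
    R ++ V.take 1 <+: (mk (R ++ V ++ invRev R) * g).toWord := by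
  set u := (mk R)⁻¹ * g
  have hgu : g = mk R * u := (mul_inv_cancel_left (mk R) g).symm
  have hinv := invRev_append_append_invRev R V ▸ hred.invRev
  have hu : ¬ (invRev V).take 1 <+: u.toWord := by
    rintro ⟨rest, hrest⟩
    apply hg
    have hRu : IsReduced (R ++ u.toWord) := by
      rw [← hrest, ← append_assoc]
      refine IsReduced.append_overlap (hinv.infix ?_) (hrest ▸ isReduced_toWord) ?_
      · exact ((prefix_append_right_inj R).mpr (take_prefix 1 _)).trans (prefix_append _ _)
          |>.isInfix
      · simpa [invRev] using hV
    rw [hgu, toWord_mk_mul_of_isReduced hRu, ← hrest, ← append_assoc]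
    exact prefix_append _ _
  have hVu : IsReduced (V ++ u.toWord) := by
    refine isChain_append.mpr ⟨hred.infix ⟨R, invRev R, rfl⟩, isReduced_toWord, ?_⟩
    intro a ha b hb hab
    by_contra hne
    apply hu
    rw [take_one_invRev_of_getLast? ha, singleton_prefix_iff_head?_eq_some, Option.mem_def.mp hb]
    exact congrArg some (Prod.ext hab.symm (Bool.eq_not.mpr (Ne.symm hne)))
  have hmul : mk (R ++ V ++ invRev R) * g = mk (R ++ V) * u := by
    rw [hgu, ← mul_mk, ← inv_mk]; group
  rw [hmul, toWord_mk_mul_of_isReduced]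
  · rw [append_assoc]
    exact (prefix_append_right_inj R).mpr ((take_prefix 1 V).trans (prefix_append _ _))
  · exact IsReduced.append_overlap (hred.infix ⟨[], invRev R, by simp⟩) hVu hV

theorem disjoint_setOf_prefix {P Q : List (α × Bool)} (hPQ : ¬ P <+: Q) (hQP : ¬ Q <+: P) :
    Disjoint {g : FreeGroup α | P <+: g.toWord} {g | Q <+: g.toWord} :=
  Set.disjoint_left.mpr fun _ hP hQ => (prefix_or_prefix_of_prefix hP hQ).elim hPQ hQP

theorem injective_lift_of_pairwise_not_prefix {ι : Type u} (R V : ι → List (α × Bool))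
    (hred : ∀ i, IsReduced (R i ++ V i ++ invRev (R i))) (hV : ∀ i, V i ≠ [])
    (hprefix : Pairwise fun p q : ι × Bool =>
      ¬ pingPongPrefix (R p.1) (V p.1) p.2 <+: pingPongPrefix (R q.1) (V q.1) q.2) :
    Function.Injective (lift fun i => mk (R i ++ V i ++ invRev (R i))) := by
  rcases subsingleton_or_nontrivial ι with hι | hι
  · refine injective_lift_of_subsingleton fun i h => hV i ?_
    have := congrArg toWord h
    rw [toWord_mk, (hred i).reduce_eq, toWord_one] at this
    simp_all
  let cone : ι → Bool → Set (FreeGroup α) := fun i b =>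
    {g | pingPongPrefix (R i) (V i) b <+: g.toWord}
  have hdisj : ∀ {i j b c}, (i, b) ≠ (j, c) → Disjoint (cone i b) (cone j c) :=
    fun hne => disjoint_setOf_prefix (hprefix hne) (hprefix hne.symm)
  refine injective_lift_of_ping_pong (G := FreeGroup α) (α := FreeGroup α) _
    (fun i => cone i true) (fun i => cone i false) ?_
    (fun i j hij => hdisj (by simpa using hij)) (fun i j hij => hdisj (by simpa using hij))
    (fun i j => hdisj (by simp)) ?_ ?_
  · intro i
    refine ⟨mk (R i ++ V i ++ invRev (R i)), ?_⟩
    show _ <+: _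
    rw [toWord_mk, (hred i).reduce_eq, append_assoc]
    exact (prefix_append_right_inj _).mpr ((take_prefix 1 _).trans (prefix_append _ _))
  · rintro i _ ⟨g, hg, rfl⟩
    exact prefix_toWord_mk_mul (hred i) (hV i) hg
  · rintro i _ ⟨g, hg, rfl⟩
    have hred' := invRev_append_append_invRev (R i) (V i) ▸ (hred i).invRev
    show _ <+: ((mk (R i ++ V i ++ invRev (R i)))⁻¹ * g).toWord
    rw [inv_mk, invRev_append_append_invRev]
    refine prefix_toWord_mk_mul hred' (by simpa [invRev] using hV i) ?_
    rwa [invRev_invRev]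

theorem injective_lift_option_elim_mk {Y : Set α} {M : List (α × Bool)} (hM : IsReduced M)
    (hne : M ≠ []) (hhead : ∀ a ∈ M.head?, a.1 ∉ Y) (hlast : ∀ a ∈ M.getLast?, a.1 ∉ Y) :
    Function.Injective (lift fun o : Option Y => o.elim (mk M) fun y => of (y : α)) := by
  set R := reduceCyclically.conjugator M
  set V := reduceCyclically M
  have hRV : R ++ V ++ invRev R = M := reduceCyclically.conj_conjugator_reduceCyclically M
  have hV : V ≠ [] := by
    intro hV
    simp only [hV, append_nil] at hRV
    have hR : R = [] := eq_nil_of_isReduced_append_invRev (by rwa [hRV])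
    exact hne (by rw [← hRV, hR]; rfl)
  have hY (b : Bool) : ∀ a ∈ (pingPongPrefix R V b).head?, a.1 ∉ Y := by
    cases b
    · have hpre : pingPongPrefix R V false <+: invRev M := by
        rw [← hRV, invRev_append_append_invRev, append_assoc]
        exact (prefix_append_right_inj R).mpr ((take_prefix 1 _).trans (prefix_append _ _))
      rw [hpre.head?_eq (pingPongPrefix_ne_nil hV _)]
      simp only [invRev, head?_reverse, getLast?_map, Option.mem_map]
      rintro _ ⟨l, hl, rfl⟩
      exact hlast l hl
    · have hpre : pingPongPrefix R V true <+: M := by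
        rw [← hRV, append_assoc]
        exact (prefix_append_right_inj R).mpr ((take_prefix 1 _).trans (prefix_append _ _))
      rwa [hpre.head?_eq (pingPongPrefix_ne_nil hV _)]
  convert injective_lift_of_pairwise_not_prefix (fun o : Option Y => o.elim R fun _ => [])
    (fun o => o.elim V fun y => [((y : α), true)]) (by rintro (_ | y) <;> simp [hRV, hM])
    (by rintro (_ | y) <;> simp [hV])
    (pairwise_not_prefix_option_elim (reduceCyclically.isCyclicallyReduced hM) hV hY) using 3
  funext o
  cases o <;> simp [hRV]
  rfl

theorem injective_lift_option_elim {X : Type u} [DecidableEq X] {Y : Set X} {w : FreeGroup X}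
    (hw : ∃ p ∈ w.toWord, p.1 ∉ Y) :
    Function.Injective (lift fun o : Option Y => o.elim w fun y => of (y : X)) := by
  classical
  obtain ⟨P, M, S, hPMS, hP, hS, hne, hhead, hlast⟩ :=
    w.toWord.exists_eq_append_append_of_exists_not (fun a : X × Bool => decide (a.1 ∈ Y))
      (by simpa using hw)
  have hrange : Set.range ((fun o : Option Y => o.elim w fun y => of (y : X)) ∘ some) =
      of '' Y := by
    rw [Set.image_eq_range]; rfl
  refine injective_lift_of_injective_lift_mul_mul (h := (mk P)⁻¹) (h' := (mk S)⁻¹) ?_ ?_ ?_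
  · rw [hrange]; exact Subgroup.inv_mem _ (mk_mem_closure_of_forall_mem (by simpa using hP))
  · rw [hrange]; exact Subgroup.inv_mem _ (mk_mem_closure_of_forall_mem (by simpa using hS))
  convert injective_lift_option_elim_mk (Y := Y) (isReduced_toWord.infix ⟨P, S, hPMS.symm⟩) hne
    (by simpa using hhead) (by simpa using hlast) using 3
  funext o
  cases o
  · show (mk P)⁻¹ * w * (mk S)⁻¹ = mk M
    rw [← mk_toWord (x := w), hPMS, ← mul_mk, ← mul_mk]
    group
  · rfl

end FreeGroup

/-- If `w` is an element of the free group on `X` whose reduced word uses a generator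
outside `Y` (equivalently, `w` does not lie in the subgroup generated by `Y`), then
sending a fresh symbol `t` to `w` and each `y ∈ Y` to itself extends to an isomorphism
from the free group on `{t} ∪ Y` onto the subgroup generated by `{w} ∪ Y`. -/
theorem stmt_1 {X : Type} [DecidableEq X] (Y : Set X) (w : FreeGroup X)
    (hw : ∃ p ∈ w.toWord, p.1 ∉ Y) :
    ∃ e : FreeGroup (Option Y) ≃*
        Subgroup.closure ({w} ∪ (FreeGroup.of '' Y) : Set (FreeGroup X)),
      ((e (FreeGroup.of none) : Subgroup.closure ({w} ∪ (FreeGroup.of '' Y) : Set (FreeGroup X))) : FreeGroup X) = w ∧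
      ∀ y : Y, ((e (FreeGroup.of (some y)) :
        Subgroup.closure ({w} ∪ (FreeGroup.of '' Y) : Set (FreeGroup X))) : FreeGroup X)
          = FreeGroup.of (y : X) := by
  have hinj := FreeGroup.injective_lift_option_elim hw
  have hrange : (FreeGroup.lift fun o : Option Y => o.elim w fun y => FreeGroup.of (y : X)).range
      = Subgroup.closure ({w} ∪ (FreeGroup.of '' Y) : Set (FreeGroup X)) := by
    rw [FreeGroup.range_lift_eq_closure, Option.range_elim, Set.image_eq_range, Set.insert_eq]
  refine ⟨(MonoidHom.ofInjective hinj).trans (MulEquiv.subgroupCongr hrange), ?_, fun y => ?_⟩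
  · exact (MonoidHom.ofInjective_apply hinj).trans (FreeGroup.lift_apply_of (x := none))
  · exact (MonoidHom.ofInjective_apply hinj).trans (FreeGroup.lift_apply_of (x := some y))
end

section
/- For every prime p, there are exactly 2^{2^{ℵ₀}} group homomorphisms from ∏_{n ∈ ℕ} ℤ to ℤ/pℤ. -/
open Cardinal in
/-- For every prime `p`, there are exactly `2 ^ (2 ^ ℵ₀)` group homomorphisms from the
Baer–Specker group `∏_{n ∈ ℕ} ℤ` to `ℤ/pℤ`. -/
theorem stmt_3 (p : ℕ) (hp : p.Prime) :
    #((ℕ → ℤ) →+ ZMod p) = (2 : Cardinal) ^ ((2 : Cardinal) ^ aleph0) := by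
  haveI : Fact p.Prime := ⟨hp⟩
  have hcont : ℵ₀ ≤ (2 : Cardinal) ^ aleph0 := (cantor ℵ₀).le
  have hpi : #(ℕ → ZMod p) = 2 ^ aleph0 := by
    rw [mk_arrow]
    simp only [mk_fintype, ZMod.card, lift_natCast, lift_id, mk_eq_aleph0]
    exact nat_power_eq le_rfl hp.two_le
  apply le_antisymm
  · calc #((ℕ → ℤ) →+ ZMod p) ≤ #((ℕ → ℤ) → ZMod p) :=
          mk_le_of_injective (f := fun f => ⇑f) (fun f g h => DFunLike.coe_injective h)
    _ = (p : Cardinal) ^ #(ℕ → ℤ) := by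
          rw [mk_arrow]; simp [ZMod.card]
    _ = (p : Cardinal) ^ ((2 : Cardinal) ^ aleph0) := by
          congr 1
          rw [mk_arrow]
          simp only [mk_int, lift_aleph0, lift_id, mk_eq_aleph0]
          exact power_self_eq le_rfl
    _ = 2 ^ ((2 : Cardinal) ^ aleph0) := nat_power_eq hcont hp.two_le
  · obtain ⟨ι, b⟩ := Module.Free.exists_basis (R := ZMod p) (M := ℕ → ZMod p)
    have h1 : #(ι →₀ ZMod p) = 2 ^ aleph0 := by
      rw [← hpi]; exact (mk_congr b.repr.toEquiv).symm
    haveI : Infinite ι := by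
      by_contra h
      rw [not_infinite_iff_finite] at h
      haveI : Finite (ι →₀ ZMod p) :=
        Finite.of_injective (fun f : ι →₀ ZMod p => ⇑f) DFunLike.coe_injective
      exact absurd (h1 ▸ hcont) (not_le.mpr (Cardinal.lt_aleph0_of_finite _))
    have hι : #ι = 2 ^ aleph0 := by
      rwa [Cardinal.mk_finsupp_of_infinite, max_eq_left
        ((Cardinal.lt_aleph0_of_finite (ZMod p)).le.trans (aleph0_le_mk ι))] at h1
    have hdual : #((ℕ → ZMod p) →ₗ[ZMod p] ZMod p) = 2 ^ ((2 : Cardinal) ^ aleph0) := by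
      rw [← Cardinal.mk_congr (b.constr (ZMod p) (M' := ZMod p)).toEquiv, mk_arrow, hι]
      simp only [mk_fintype, ZMod.card, lift_natCast, lift_id]
      exact nat_power_eq hcont hp.two_le
    rw [← hdual]
    let π : (ℕ → ℤ) →+ (ℕ → ZMod p) :=
      Pi.addMonoidHom (fun n => (Int.castAddHom (ZMod p)).comp (Pi.evalAddMonoidHom _ n))
    have hπ : Function.Surjective π := fun g => by
      refine ⟨fun n => (ZMod.intCast_surjective (g n)).choose, funext fun n => ?_⟩
      exact (ZMod.intCast_surjective (g n)).choose_spec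
    refine mk_le_of_injective (f := fun f : (ℕ → ZMod p) →ₗ[ZMod p] ZMod p =>
      f.toAddMonoidHom.comp π) (fun f g h => ?_)
    exact LinearMap.toAddMonoidHom_injective ((AddMonoidHom.cancel_right hπ).mp h)
end

section
/- The direct product ∏_{n ∈ ℕ} ℤ contains a free abelian subgroup of rank 2^ℵ₀. -/
/-!
Choose continuum many reals `x i` that are linearly independent over `ℤ` (a Hamel basis of `ℝ`
over `ℚ`), and send `x i` to the integer sequence `n ↦ ⌊n * x i⌋`. If `∑ cᵢ ⌊n xᵢ⌋ = 0` for all `n`,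
then `n * ∑ cᵢ xᵢ = ∑ cᵢ fract (n xᵢ)` is bounded by `∑ |cᵢ|` for all `n`, so `∑ cᵢ xᵢ = 0` and all
`cᵢ` vanish. Hence these sequences freely generate a free abelian subgroup of `ℕ → ℤ`.
-/

section OrderedField

variable {K : Type*} [Field K] [LinearOrder K] [IsStrictOrderedRing K]

theorem eq_zero_of_forall_abs_nat_mul_le [Archimedean K] {a C : K} (h : ∀ n : ℕ, |n * a| ≤ C) :
    a = 0 := by
  by_contra ha
  obtain ⟨n, hn⟩ := exists_nat_gt (C / |a|)
  have hCn := h n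
  rw [abs_mul, Nat.abs_cast] at hCn
  rw [div_lt_iff₀ (abs_pos.mpr ha)] at hn
  linarith

theorem abs_sum_mul_fract_le [FloorRing K] {ι : Type*} (s : Finset ι) (c : ι → ℤ) (y : ι → K) :
    |∑ j ∈ s, (c j : K) * Int.fract (y j)| ≤ ∑ j ∈ s, |(c j : K)| := by
  refine (Finset.abs_sum_le_sum_abs _ _).trans (Finset.sum_le_sum fun j _ => ?_)
  rw [abs_mul, abs_of_nonneg (Int.fract_nonneg (y j))]
  exact mul_le_of_le_one_right (abs_nonneg _) (Int.fract_lt_one _).le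

theorem linearIndependent_floor_nat_mul [FloorRing K] [Archimedean K] {ι : Type*} {x : ι → K}
    (hx : LinearIndependent ℤ x) : LinearIndependent ℤ fun i (n : ℕ) => ⌊(n : K) * x i⌋ := by
  rw [linearIndependent_iff'] at hx ⊢
  intro s c hc
  refine hx s c ?_
  have hfloor (n : ℕ) : ∑ j ∈ s, (c j : K) * ⌊(n : K) * x j⌋ = 0 := by
    have := congrFun hc n
    simp only [Finset.sum_apply, Pi.smul_apply, smul_eq_mul, Pi.zero_apply] at this
    exact_mod_cast this
  simp only [zsmul_eq_mul]
  refine eq_zero_of_forall_abs_nat_mul_le (C := ∑ j ∈ s, |(c j : K)|) fun n => ?_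
  calc |n * ∑ j ∈ s, (c j : K) * x j|
      = |∑ j ∈ s, (c j : K) * Int.fract ((n : K) * x j)| := by
        simp only [Int.fract, mul_sub, Finset.sum_sub_distrib, hfloor, sub_zero, Finset.mul_sum]
        congr! 2 with j
        ring
    _ ≤ ∑ j ∈ s, |(c j : K)| := abs_sum_mul_fract_le s c _

end OrderedField

theorem exists_linearIndependent_int_real : ∃ x : ℝ → ℝ, LinearIndependent ℤ x := by
  let B := Module.Basis.ofVectorSpace ℚ ℝ
  obtain ⟨e⟩ : Nonempty (ℝ ≃ Module.Basis.ofVectorSpaceIndex ℚ ℝ) := by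
    rw [← Cardinal.eq, B.mk_eq_rank'', Real.rank_rat_real, Cardinal.mk_real]
  exact ⟨B ∘ e, (B.linearIndependent.comp e e.injective).restrict_scalars' ℤ⟩

theorem FreeAbelianGroup.lift_injective_of_linearIndependent {α G : Type*} [AddCommGroup G]
    {v : α → G} (hv : LinearIndependent ℤ v) : Function.Injective (lift v) := by
  have hlift : lift v =
      (Finsupp.linearCombination ℤ v).toAddMonoidHom.comp (equivFinsupp α).toAddMonoidHom :=
    lift_ext _ _ fun a => by simp
  rw [hlift, AddMonoidHom.coe_comp]
  exact Function.Injective.comp hv (equivFinsupp α).injective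

/-- The Baer–Specker group `∏_{n ∈ ℕ} ℤ` contains a free abelian subgroup of rank
`2 ^ ℵ₀`: the free abelian group on a set of cardinality continuum embeds into it. -/
theorem stmt_4 :
    ∃ f : FreeAbelianGroup ℝ →+ (ℕ → ℤ), Function.Injective f := by
  obtain ⟨x, hx⟩ := exists_linearIndependent_int_real
  exact ⟨_, FreeAbelianGroup.lift_injective_of_linearIndependent
    (linearIndependent_floor_nat_mul hx)⟩
end

section
/- If A is an abelian group containing a subgroup isomorphic to ℚ, then there are at least 2^{2^{ℵ₀}} group homomorphisms from ∏_{n ∈ ℕ} ℤ to A. -/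
/-!
Code the nodes of the full binary tree by natural numbers. The branches `r : ℕ → Bool` give
`2 ^ ℵ₀` subsets of `ℕ`, any two of which meet in finitely many nodes, so no branch is covered by
finitely many others and their indicator sequences are linearly independent in `ℕ → ℤ`. Since `ℚ`
is divisible, hence an injective `ℤ`-module, every assignment of rationals to these sequences
extends to a homomorphism `(ℕ → ℤ) → ℚ`; composing with `ℚ ↪ A` gives `ℵ₀ ^ (2 ^ ℵ₀)` distinct
homomorphisms into `A`.
-/

open Cardinal

theorem linearIndependent_indicator_one {ι α R : Type*} [Ring R] {S : ι → Set α}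
    (hS : ∀ i (s : Finset ι), i ∉ s → ∃ x ∈ S i, ∀ j ∈ s, x ∉ S j) :
    LinearIndependent R fun i => (S i).indicator (1 : α → R) := by
  classical
  rw [linearIndependent_iff']
  intro s g hg i hi
  obtain ⟨x, hxi, hx⟩ := hS i (s.erase i) (s.notMem_erase i)
  have hgx := congrFun hg x
  simp only [Finset.sum_apply, Pi.smul_apply, Pi.zero_apply] at hgx
  rwa [Finset.sum_eq_single_of_mem i hi fun j hj hji => by
    simp [Set.indicator_of_notMem (hx j (Finset.mem_erase.mpr ⟨hji, hj⟩))],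
    Set.indicator_of_mem hxi, Pi.one_apply, smul_eq_mul, mul_one] at hgx

noncomputable def prefixCode (r : ℕ → Bool) (n : ℕ) : ℕ :=
  Encodable.encode ((List.range n).map r)

theorem eq_of_prefixCode_eq {r r' : ℕ → Bool} {n m : ℕ}
    (h : prefixCode r n = prefixCode r' m) : ∀ i < n, r i = r' i := by
  have h := Encodable.encode_injective h
  obtain rfl : n = m := by simpa using congrArg List.length h
  simpa [List.map_inj_left] using h

theorem exists_mem_range_prefixCode_notMem (r : ℕ → Bool) (s : Finset (ℕ → Bool)) (hr : r ∉ s) :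
    ∃ x ∈ Set.range (prefixCode r), ∀ r' ∈ s, x ∉ Set.range (prefixCode r') := by
  have hdiff : ∀ r' ∈ s, ∃ k, r k ≠ r' k := fun r' hr' =>
    Function.ne_iff.mp fun h => hr (h ▸ hr')
  choose! k hk using hdiff
  refine ⟨prefixCode r (s.sup k + 1), ⟨_, rfl⟩, fun r' hr' ⟨m, hm⟩ => ?_⟩
  exact hk r' hr' (eq_of_prefixCode_eq hm.symm _ (Nat.lt_succ_of_le (Finset.le_sup hr')))

section Baer

variable {R : Type*} [Ring R]

theorem LinearIndependent.exists_linearMap_comp_eq {ι M Q : Type*} [AddCommGroup M] [Module R M]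
    [AddCommGroup Q] [Module R Q] (hQ : Module.Baer R Q) {v : ι → M}
    (hv : LinearIndependent R v) (g : ι → Q) : ∃ φ : M →ₗ[R] Q, φ ∘ v = g := by
  obtain ⟨φ, hφ⟩ := hQ.extension_property _ hv (Finsupp.linearCombination R g)
  refine ⟨φ, funext fun i => ?_⟩
  simpa using LinearMap.congr_fun hφ (Finsupp.single i 1)

universe u in
theorem LinearIndependent.mk_fun_le_mk_linearMap {ι M Q : Type u} [AddCommGroup M] [Module R M]
    [AddCommGroup Q] [Module R Q] (hQ : Module.Baer R Q) {v : ι → M}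
    (hv : LinearIndependent R v) : #(ι → Q) ≤ #(M →ₗ[R] Q) := by
  choose φ hφ using hv.exists_linearMap_comp_eq hQ
  exact mk_le_of_injective (f := φ) fun g g' h => by rw [← hφ g, ← hφ g', h]

end Baer

/-- If an abelian group `A` contains a subgroup isomorphic to `ℚ`, then there are at
least `2 ^ (2 ^ ℵ₀)` group homomorphisms from `∏_{n ∈ ℕ} ℤ` to `A`. -/
theorem stmt_5 (A : Type) [AddCommGroup A] (h : ∃ f : ℚ →+ A, Function.Injective f) :
    (2 : Cardinal) ^ ((2 : Cardinal) ^ aleph0) ≤ #((ℕ → ℤ) →+ A) := by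
  obtain ⟨f, hf⟩ := h
  have hv : LinearIndependent ℤ fun r => (Set.range (prefixCode r)).indicator (1 : ℕ → ℤ) :=
    linearIndependent_indicator_one exists_mem_range_prefixCode_notMem
  have hcomp : Function.Injective fun φ : (ℕ → ℤ) →ₗ[ℤ] ℚ => f.comp φ.toAddMonoidHom :=
    fun φ ψ h => LinearMap.ext fun x => hf (DFunLike.congr_fun h x)
  calc (2 : Cardinal) ^ ((2 : Cardinal) ^ aleph0)
      ≤ aleph0 ^ ((2 : Cardinal) ^ aleph0) := power_le_power_right ofNat_le_aleph0
    _ = #((ℕ → Bool) → ℚ) := by simp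
    _ ≤ #((ℕ → ℤ) →ₗ[ℤ] ℚ) := hv.mk_fun_le_mk_linearMap (Module.Baer.of_divisible ℚ)
    _ ≤ #((ℕ → ℤ) →+ A) := mk_le_of_injective hcomp
end

section
/- If A is an abelian group containing an element of prime order p, then there are at least 2^{2^{ℵ₀}} group homomorphisms from ∏_{n ∈ ℕ} ℤ to A. -/
open Cardinal in
/-- If an abelian group `A` contains an element of prime order `p`, then there are at
least `2 ^ (2 ^ ℵ₀)` group homomorphisms from `∏_{n ∈ ℕ} ℤ` to `A`. -/
theorem stmt_6 (A : Type) [AddCommGroup A] (p : ℕ) (hp : p.Prime)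
    (h : ∃ a : A, addOrderOf a = p) :
    (2 : Cardinal) ^ ((2 : Cardinal) ^ aleph0) ≤ #((ℕ → ℤ) →+ A) := by
  obtain ⟨a, ha⟩ := h
  haveI : Fact p.Prime := ⟨hp⟩
  haveI : NeZero p := ⟨hp.pos.ne'⟩
  set K := ZMod p
  -- the injective hom `ZMod p →+ A` given by `a`
  have hpa : (zmultiplesHom A a) (p : ℤ) = 0 := by
    simp [← ha, zsmul_eq_mul, addOrderOf_nsmul_eq_zero]
  let g : K →+ A := ZMod.lift p ⟨zmultiplesHom A a, hpa⟩
  have hg : Function.Injective g := by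
    rw [ZMod.lift_injective]
    intro m hm
    have hm' : m • a = 0 := hm
    have : ((addOrderOf a : ℕ) : ℤ) ∣ m := addOrderOf_dvd_iff_zsmul_eq_zero.mpr hm'
    rw [ha] at this
    exact (ZMod.intCast_zmod_eq_zero_iff_dvd m p).mpr (by exact_mod_cast this)
  -- reduction mod p, coordinatewise; it is surjective
  let red : (ℕ → ℤ) →+ (ℕ → K) := AddMonoidHom.mk' (fun f n => ((f n : ℤ) : K))
    (by intro f f'; funext n; push_cast; simp)
  have hred : Function.Surjective red := by
    intro v
    exact ⟨fun n => (ZMod.cast (v n) : ℤ), funext fun n => ZMod.intCast_zmod_cast (v n)⟩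
  -- injection from linear functionals into homs to `A`
  let F : ((ℕ → K) →ₗ[K] K) → ((ℕ → ℤ) →+ A) :=
    fun φ => g.comp (φ.toAddMonoidHom.comp red)
  have hF : Function.Injective F := by
    intro φ ψ hφψ
    apply LinearMap.toAddMonoidHom_injective
    ext v
    obtain ⟨f, rfl⟩ := hred v
    have := DFunLike.congr_fun hφψ f
    exact hg this
  refine le_trans ?_ (Cardinal.mk_le_of_injective hF)
  -- count linear functionals via a basis
  obtain ⟨⟨ι, b⟩⟩ := Module.Free.exists_basis (R := K) (M := ℕ → K)
  have e := (b.constr K (M' := K))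
  rw [← Cardinal.mk_congr e.toEquiv]
  have hι : (2 : Cardinal) ^ aleph0 ≤ #ι := by
    rw [b.mk_eq_rank'', rank_fun_infinite]
    calc (2 : Cardinal) ^ aleph0 ≤ #K ^ aleph0 := by
          refine Cardinal.power_le_power_right ?_
          rw [Cardinal.two_le_iff]
          exact ⟨0, 1, zero_ne_one⟩
      _ = #(ℕ → K) := by rw [Cardinal.mk_arrow]; simp
  calc (2 : Cardinal) ^ ((2:Cardinal) ^ aleph0) ≤ (2 : Cardinal) ^ #ι :=
        Cardinal.power_le_power_left (by norm_num) hι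
    _ ≤ #K ^ #ι := Cardinal.power_le_power_right
        (by rw [Cardinal.two_le_iff]; exact ⟨0, 1, zero_ne_one⟩)
    _ = #(ι → K) := by rw [Cardinal.mk_arrow]; simp
end

section
/- Let A be a nontrivial slender abelian group with cardinality strictly less than 2^ℵ₀. Then the set of group homomorphisms Hom(∏_{n ∈ ℕ} ℤ, A) has cardinality exactly |A|. -/
/-!
Upper bound: slenderness makes a homomorphism `φ : ℤ^ℕ → A` the finite sum
`x ↦ ∑_{i<n} x i • φ eᵢ`, so `φ` is encoded by the list `[φ e₀, …, φ e_{n-1}]`, and there are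
`#A` such lists once `A` is infinite. Lower bound: `a ↦ (x ↦ x 0 • a)` is injective.

A slender group is infinite because it has no element `a ≠ 0` of prime order `p`: the
homomorphism `ℤ^ℕ → (ℤ/p)^ℕ / (ℤ/p)^(ℕ) → ℤ/p → A`, built from a linear functional of the
`ℤ/p`-vector space of germs along the cofinite filter taking the value `1` at the constant
sequence `1`, sends every tail indicator to `a`.
-/

/-- An abelian group `A` is slender if every homomorphism `∏_{n ∈ ℕ} ℤ → A` vanishes on
all sequences supported beyond the first `n` coordinates, for some `n`. -/
def Slender (A : Type) [AddCommGroup A] : Prop :=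
  ∀ φ : (ℕ → ℤ) →+ A, ∃ n : ℕ, ∀ x : ℕ → ℤ, (∀ i < n, x i = 0) → φ x = 0

open Cardinal Filter

section

variable {A : Type} [AddCommGroup A]

theorem AddMonoidHom.apply_eq_sum_range_single (φ : (ℕ → ℤ) →+ A) {n : ℕ}
    (hφ : ∀ x : ℕ → ℤ, (∀ i < n, x i = 0) → φ x = 0) (x : ℕ → ℤ) :
    φ x = ∑ i ∈ Finset.range n, x i • φ (Pi.single i 1) := by
  have htail : φ (x - ∑ i ∈ Finset.range n, x i • Pi.single i 1) = 0 := by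
    refine hφ _ fun j hj => ?_
    simp [Finset.sum_apply, Pi.single_apply, hj]
  rw [map_sub, sub_eq_zero, map_sum] at htail
  simpa only [map_zsmul] using htail

theorem Slender.mk_addMonoidHom_le_mk_list (hA : Slender A) :
    #((ℕ → ℤ) →+ A) ≤ #(List A) := by
  choose N hN using hA
  refine mk_le_of_injective (f := fun φ => (List.range (N φ)).map fun i => φ (Pi.single i 1)) ?_
  intro φ ψ h
  have hlen : N φ = N ψ := by simpa using congrArg List.length h
  simp only [hlen, List.map_inj_left, List.mem_range] at h
  refine DFunLike.ext _ _ fun x => ?_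
  rw [φ.apply_eq_sum_range_single (hN φ), ψ.apply_eq_sum_range_single (hN ψ), hlen]
  exact Finset.sum_congr rfl fun i hi => by rw [h i (Finset.mem_range.1 hi)]

theorem mk_le_mk_addMonoidHom_pi_int : #A ≤ #((ℕ → ℤ) →+ A) := by
  refine mk_le_of_injective
    (f := fun a => (zmultiplesHom A a).comp (Pi.evalAddMonoidHom (fun _ : ℕ => ℤ) 0)) ?_
  intro a b h
  simpa using DFunLike.congr_fun h (Pi.single 0 1)

theorem Slender.eq_zero_of_prime_nsmul_eq_zero (hA : Slender A) {p : ℕ} [Fact p.Prime] {a : A}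
    (ha : p • a = 0) : a = 0 := by
  obtain ⟨f, hf⟩ := Module.Projective.exists_dual_eq_one (ZMod p)
    (one_ne_zero : (1 : Germ (cofinite : Filter ℕ) (ZMod p)) ≠ 0)
  let ψ : (ℕ → ℤ) →+ A :=
    (ZMod.lift p ⟨zmultiplesHom A a, by simpa using ha⟩).comp <| f.toAddMonoidHom.comp <|
      (Germ.coeAddHom cofinite).comp ((Int.castAddHom (ZMod p)).compLeft ℕ)
  obtain ⟨n, hn⟩ := hA ψ
  let tail : ℕ → ℤ := fun i => if i < n then 0 else 1
  have hgerm : ((Int.castAddHom (ZMod p)).compLeft ℕ tail : Germ (cofinite : Filter ℕ) (ZMod p))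
      = 1 := by
    rw [← Germ.coe_one, Germ.coe_eq, EventuallyEq, Nat.cofinite_eq_atTop, eventually_atTop]
    exact ⟨n, fun i hi => by simp [tail, AddMonoidHom.compLeft, Nat.not_lt.2 hi]⟩
  have hψ : ψ tail = a := by
    simp only [ψ, AddMonoidHom.comp_apply, Germ.coe_coeAddHom, hgerm, LinearMap.toAddMonoidHom_coe,
      hf]
    rw [← Int.cast_one, ZMod.lift_coe]
    simp
  rw [← hψ]
  exact hn _ fun i hi => if_pos hi

theorem Slender.infinite [Nontrivial A] (hA : Slender A) : Infinite A := by
  rw [← not_finite_iff_infinite]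
  intro hfin
  obtain ⟨p, hp, hpdvd⟩ := Nat.exists_prime_and_dvd (Finite.one_lt_card (α := A)).ne'
  have := Fact.mk hp
  obtain ⟨a, ha⟩ := exists_prime_addOrderOf_dvd_card' p hpdvd
  have ha0 := hA.eq_zero_of_prime_nsmul_eq_zero (ha ▸ addOrderOf_nsmul_eq_zero a)
  rw [ha0, addOrderOf_zero] at ha
  exact hp.one_lt.ne ha

end

open Cardinal in
theorem stmt_7_general (A : Type) [AddCommGroup A] [Nontrivial A] (hA : Slender A) :
    #((ℕ → ℤ) →+ A) = #A := by
  have := hA.infinite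
  exact le_antisymm (hA.mk_addMonoidHom_le_mk_list.trans_eq (mk_list_eq_mk A))
    mk_le_mk_addMonoidHom_pi_int

open Cardinal in
/-- If `A` is a nontrivial slender abelian group of cardinality less than the continuum,
then `Hom(∏_{n ∈ ℕ} ℤ, A)` has cardinality exactly `|A|`. -/
theorem stmt_7 (A : Type) [AddCommGroup A] [Nontrivial A] (hA : Slender A)
    (hcard : #A < 2 ^ aleph0) :
    #((ℕ → ℤ) →+ A) = #A :=
  stmt_7_general A hA
end

section
/- Let A be an abelian group that is not slender and has cardinality strictly less than 2^ℵ₀. Then the set of group homomorphisms Hom(∏_{n ∈ ℕ} ℤ, A) has cardinality exactly 2^{2^{ℵ₀}}. -/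
/-!
The upper bound is `#Hom(ℤ^ℕ, A) ≤ #A ^ 𝔠 ≤ 𝔠 ^ 𝔠 = 2 ^ 𝔠`.

For the lower bound, `A` contains a copy of a field `K` with `#K < 𝔠`, namely `ℤ/p` or `ℚ`
(Sąsiada). If `A` has torsion, it has an element of prime order. Let `A` be torsion-free, let
`φ` witness that `A` is not slender, and suppose no nonzero element of `A` is divisible by every
integer. Pick `z k` vanishing below `k` with `φ (z k) ≠ 0`, and `q k ≠ 0` not dividing
`φ (z k)`. Then `c ↦ φ (∑_{k ∈ c} (q 0 ⋯ q (k-1)) • z k)` is injective on subsets `c ⊆ ℕ`: at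
the first index `m` where two subsets differ, cancelling `q 0 ⋯ q (m-1)` would make `q m`
divide `φ (z m)`. This contradicts `#A < 𝔠`. Hence the infinitely divisible elements of `A`
form a nonzero divisible, hence injective, group, and a nonzero map `ℤ → A` into it extends to
an embedding of `ℚ`.

Then let `W` be the `K`-span of `ℤ^ℕ` inside `K^ℕ`. As `𝔠 ≤ #W` and `#K < #W`, `W` has
dimension `#W`, so it carries `#K ^ #W ≥ 2 ^ 𝔠` linear functionals, and these restrict to
distinct homomorphisms `ℤ^ℕ → K ↪ A`.
-/

open Cardinal Function

theorem cardinalMk_addMonoidHom_le {A : Type} [AddCommGroup A] (hA : #A ≤ 𝔠) :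
    #((ℕ → ℤ) →+ A) ≤ 2 ^ 𝔠 :=
  calc #((ℕ → ℤ) →+ A) ≤ #((ℕ → ℤ) → A) := mk_le_of_injective DFunLike.coe_injective
    _ = #A ^ 𝔠 := by rw [← power_def]; simp
    _ ≤ 𝔠 ^ 𝔠 := power_le_power_right hA
    _ = 2 ^ 𝔠 := power_self_eq aleph0_le_continuum

universe u

section Dual

variable {K V : Type u} [Field K] [AddCommGroup V] [Module K V]

theorem aleph0_le_rank_of_cardinalMk_lt (hK : #K < #V) (hV : ℵ₀ ≤ #V) :
    ℵ₀ ≤ Module.rank K V := by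
  by_contra! h
  have : Module.Finite K V := Module.rank_lt_aleph0_iff.mp h
  obtain ⟨n, hn⟩ := lt_aleph0.mp h
  have hcard : #V = #K ^ (n : Cardinal) := by
    rw [← hn]
    exact cardinalMk_eq_cardinalMk_field_pow_rank K V
  rcases lt_or_ge #K ℵ₀ with hK_fin | hK_inf
  · exact hV.not_gt (hcard ▸ power_lt_aleph0 hK_fin natCast_lt_aleph0)
  · exact hK.not_ge (hcard ▸ power_nat_le hK_inf)

theorem cardinalMk_eq_rank_of_cardinalMk_lt (hK : #K < #V) (hV : ℵ₀ ≤ #V) :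
    #V = Module.rank K V := by
  let b := Module.Free.chooseBasis K V
  have : Infinite (Module.Free.ChooseBasisIndex K V) := by
    rw [← aleph0_le_mk_iff, b.mk_eq_rank'']
    exact aleph0_le_rank_of_cardinalMk_lt hK hV
  have hmax : #V = max (Module.rank K V) #K := by
    rw [b.repr.toEquiv.cardinal_eq, mk_finsupp_of_infinite, b.mk_eq_rank'']
  rcases max_choice (Module.rank K V) #K with h | h
  · rwa [h] at hmax
  · exact absurd (hmax.trans h) hK.ne'

theorem two_pow_cardinalMk_le_cardinalMk_dual (hK : #K < #V) (hV : ℵ₀ ≤ #V) :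
    2 ^ #V ≤ #(V →ₗ[K] K) := by
  let b := Module.Free.chooseBasis K V
  calc 2 ^ #V ≤ #K ^ #V := power_le_power_right (two_le_iff.mpr ⟨0, 1, zero_ne_one⟩)
    _ = #K ^ #(Module.Free.ChooseBasisIndex K V) := by
      rw [b.mk_eq_rank'', cardinalMk_eq_rank_of_cardinalMk_lt hK hV]
    _ = #(V →ₗ[K] K) := by rw [power_def, (b.constr K).toEquiv.cardinal_eq]

end Dual

theorem injective_comp_of_span_range_eq_top {R M V W : Type*} [Semiring R] [AddCommMonoid M]
    [AddCommMonoid V] [AddCommMonoid W] [Module R V] [Module R W] {ι : M →+ V}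
    (hι : Submodule.span R (Set.range ι) = ⊤) :
    Injective fun f : V →ₗ[R] W => (f : V →+ W).comp ι := fun _ _ hfg =>
  LinearMap.ext_on_range hι (DFunLike.congr_fun hfg)

theorem two_pow_continuum_le_cardinalMk_addMonoidHom {K A : Type} [Field K] [AddCommGroup A]
    (hK : #K < 𝔠) {j : K →+ A} (hj : Injective j) : 2 ^ 𝔠 ≤ #((ℕ → ℤ) →+ A) := by
  let ι : (ℕ → ℤ) →+ (ℕ → K) := (Int.castAddHom K).compLeft ℕ
  let W := Submodule.span K (Set.range ι)
  let ιW : (ℕ → ℤ) →+ W := ι.codRestrict W fun x => Submodule.subset_span ⟨x, rfl⟩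
  have hspan : Submodule.span K (Set.range ιW) = ⊤ := by
    convert Submodule.span_span_coe_preimage (R := K) (s := Set.range ι)
    ext w
    exact ⟨fun ⟨x, hx⟩ => ⟨x, congrArg Subtype.val hx⟩, fun ⟨x, hx⟩ => ⟨x, Subtype.ext hx⟩⟩
  have hW : 𝔠 ≤ #W := by
    have hinj : Injective fun c : ℕ → Bool => ιW fun n => (c n).toNat := by
      intro c c' h
      funext n
      have := congrFun (congrArg Subtype.val h) n
      simp only [ιW, ι, AddMonoidHom.codRestrict_apply, AddMonoidHom.compLeft_apply, comp_apply,
        Int.coe_castAddHom, Int.cast_natCast] at this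
      revert this
      cases c n <;> cases c' n <;> simp
    simpa using mk_le_of_injective hinj
  calc 2 ^ 𝔠 ≤ 2 ^ #W := power_le_power_left two_ne_zero hW
    _ ≤ #(W →ₗ[K] K) :=
      two_pow_cardinalMk_le_cardinalMk_dual (hK.trans_le hW) (aleph0_le_continuum.trans hW)
    _ ≤ #((ℕ → ℤ) →+ K) := mk_le_of_injective (injective_comp_of_span_range_eq_top hspan)
    _ ≤ #((ℕ → ℤ) →+ A) := mk_le_of_injective fun _ _ h => (AddMonoidHom.cancel_left hj).mp h

/-- When each `z k` vanishes below `k`, this is the series `∑ₖ x k • z k`, a finite sum in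
each coordinate. -/
def seriesHom (z : ℕ → ℕ → ℤ) : (ℕ → ℤ) →+ (ℕ → ℤ) where
  toFun x i := ∑ k ∈ Finset.range (i + 1), x k * z k i
  map_zero' := by funext i; simp
  map_add' x y := by funext i; simp [add_mul, Finset.sum_add_distrib]

theorem seriesHom_single {z : ℕ → ℕ → ℤ} (hz : ∀ k i, i < k → z k i = 0) (m : ℕ) (t : ℤ) :
    seriesHom z (Pi.single m t) = t • z m := by
  funext i
  simp only [seriesHom, AddMonoidHom.coe_mk, ZeroHom.coe_mk, Pi.single_apply, ite_mul, zero_mul,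
    Finset.sum_ite_eq', Finset.mem_range, Pi.smul_apply, smul_eq_mul]
  split_ifs with hm
  · rfl
  · rw [hz m i (by omega), mul_zero]

theorem exists_eq_single_add_smul {R : Type*} [Semiring R] {x : ℕ → R} {m : ℕ} {N : R}
    (hlt : ∀ k < m, x k = 0) (hgt : ∀ k, m < k → N ∣ x k) :
    ∃ r : ℕ → R, x = Pi.single m (x m) + N • r := by
  choose r hr using hgt
  refine ⟨fun k => if h : m < k then r k h else 0, funext fun k => ?_⟩
  rcases lt_trichotomy k m with hk | rfl | hk
  · simp [hk.ne, hk.not_gt, hlt k hk]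
  · simp
  · simp [hk.ne', hk, hr k hk]

def divisibleSubgroup (A : Type*) [AddCommGroup A] : AddSubgroup A where
  carrier := {a | ∀ n : ℤ, n ≠ 0 → ∃ b, n • b = a}
  zero_mem' n _ := ⟨0, smul_zero n⟩
  add_mem' ha hb n hn :=
    let ⟨x, hx⟩ := ha n hn
    let ⟨y, hy⟩ := hb n hn
    ⟨x + y, by rw [smul_add, hx, hy]⟩
  neg_mem' ha n hn := let ⟨x, hx⟩ := ha n hn; ⟨-x, by rw [smul_neg, hx]⟩

section TorsionFree

variable {A : Type*} [AddCommGroup A] [IsAddTorsionFree A]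

theorem exists_zsmul_eq_of_seriesHom_eq_zero (φ : (ℕ → ℤ) →+ A) {z : ℕ → ℕ → ℤ}
    (hz : ∀ k i, i < k → z k i = 0) {x : ℕ → ℤ} {m : ℕ} {d q : ℤ} (hd : d ≠ 0)
    (hlt : ∀ k < m, x k = 0) (hxm : x m = d) (hgt : ∀ k, m < k → d * q ∣ x k)
    (hφ : φ (seriesHom z x) = 0) : ∃ b, q • b = φ (z m) := by
  obtain ⟨r, hr⟩ := exists_eq_single_add_smul hlt hgt
  rw [hr, hxm, map_add, seriesHom_single hz, map_add, map_zsmul, map_zsmul, map_zsmul, mul_smul,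
    ← smul_add, IsAddTorsionFree.zsmul_eq_zero_iff_right hd, add_eq_zero_iff_eq_neg] at hφ
  exact ⟨-φ (seriesHom z r), by rw [hφ, smul_neg]⟩

theorem injective_seriesHom_of_forall_not_dvd (φ : (ℕ → ℤ) →+ A) {z : ℕ → ℕ → ℤ}
    (hz : ∀ k i, i < k → z k i = 0) {q : ℕ → ℤ} (hq0 : ∀ k, q k ≠ 0)
    (hq : ∀ k b, q k • b ≠ φ (z k)) :
    Injective fun c : ℕ → Bool =>
      φ (seriesHom z fun k => if c k then ∏ j ∈ Finset.range k, q j else 0) := by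
  intro c c' hcc'
  by_contra hne
  obtain ⟨m, hm, hmin⟩ : ∃ m, c m ≠ c' m ∧ ∀ k < m, c k = c' k := by
    have h : ∃ m, c m ≠ c' m := Function.ne_iff.mp hne
    exact ⟨Nat.find h, Nat.find_spec h, fun k hk => not_not.mp (Nat.find_min h hk)⟩
  wlog hcm : c m = true generalizing c c'
  · exact this hcc'.symm (Ne.symm hne) hm.symm (fun k hk => (hmin k hk).symm)
      (by simpa [hcm] using hm.symm)
  have hc'm : c' m = false := by simpa [hcm] using hm.symm
  have hdvd : ∀ k, m < k → (∏ j ∈ Finset.range m, q j) * q m ∣ ∏ j ∈ Finset.range k, q j :=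
    fun k hk => by
      rw [← Finset.prod_range_succ]
      exact Finset.prod_dvd_prod_of_subset _ _ q (Finset.range_subset_range.mpr hk)
  obtain ⟨b, hb⟩ := exists_zsmul_eq_of_seriesHom_eq_zero φ hz
    (x := fun k => (if c k then ∏ j ∈ Finset.range k, q j else 0) -
      if c' k then ∏ j ∈ Finset.range k, q j else 0) (m := m)
    (d := ∏ j ∈ Finset.range m, q j) (q := q m)
    (Finset.prod_ne_zero_iff.mpr fun j _ => hq0 j) (fun k hk => by simp [hmin k hk])
    (by simp [hcm, hc'm])
    (fun k hk => dvd_sub (by split_ifs <;> simp [hdvd k hk]) (by split_ifs <;> simp [hdvd k hk]))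
    (by rw [← Pi.sub_def, map_sub, map_sub, sub_eq_zero]; exact hcc')
  exact hq m b hb

noncomputable instance : DivisibleBy (divisibleSubgroup A) ℤ :=
  divisibleByOfSMulRightSurj _ _ fun {n} hn ⟨a, ha⟩ => by
    obtain ⟨b, rfl⟩ := ha n hn
    refine ⟨⟨b, fun m hm => ?_⟩, rfl⟩
    obtain ⟨c, hc⟩ := ha (n * m) (mul_ne_zero hn hm)
    exact ⟨c, (zsmul_right_inj hn).mp (by rwa [← mul_smul])⟩

theorem exists_injective_rat_addMonoidHom {a : A} (ha : a ∈ divisibleSubgroup A) (ha0 : a ≠ 0) :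
    ∃ j : ℚ →+ A, Injective j := by
  obtain ⟨g, hg⟩ := (Module.Baer.of_divisible (divisibleSubgroup A)).extension_property_addMonoidHom
    (Int.castAddHom ℚ) Int.cast_injective (zmultiplesHom _ ⟨a, ha⟩)
  refine ⟨(divisibleSubgroup A).subtype.comp g, (injective_iff_map_eq_zero _).mpr fun r hr => ?_⟩
  have hnum : g (r.num : ℚ) = r.num • ⟨a, ha⟩ := DFunLike.congr_fun hg r.num
  rw [← Rat.mul_den_eq_num, mul_comm, ← Int.cast_natCast, ← zsmul_eq_mul, map_zsmul] at hnum
  have hgr : (g r : A) = 0 := hr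
  simpa [hgr, ha0] using (congrArg Subtype.val hnum).symm

end TorsionFree

theorem exists_mem_divisibleSubgroup_ne_zero_of_not_slender {A : Type} [AddCommGroup A]
    [IsAddTorsionFree A] (hA : ¬ Slender A) (hcard : #A < 𝔠) :
    ∃ a ∈ divisibleSubgroup A, a ≠ 0 := by
  simp only [Slender, not_forall, not_exists] at hA
  obtain ⟨φ, hφ⟩ := hA
  choose z hz hφz using hφ
  by_contra! hdiv
  have : ∀ k, ∃ q : ℤ, q ≠ 0 ∧ ∀ b, q • b ≠ φ (z k) := fun k => by
    by_contra! h
    exact hφz k (hdiv _ h)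
  choose q hq0 hq using this
  exact (mk_le_of_injective (injective_seriesHom_of_forall_not_dvd φ hz hq0 hq)).not_gt
    (by simpa using hcard)

theorem exists_addOrderOf_eq_prime {A : Type*} [AddCommGroup A] (h : ¬ IsAddTorsionFree A) :
    ∃ p, p.Prime ∧ ∃ b : A, addOrderOf b = p := by
  obtain ⟨a, ha, hfin⟩ := not_isAddTorsionFree_iff_isOfFinAddOrder.mp h
  have hm1 : addOrderOf a ≠ 1 := by rwa [Ne, AddMonoid.addOrderOf_eq_one_iff]
  exact ⟨_, Nat.minFac_prime hm1, _,
    addOrderOf_nsmul_addOrderOf_sub hfin.addOrderOf_pos.ne' (Nat.minFac_dvd _)⟩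

theorem exists_injective_zmod_addOrderOf {A : Type*} [AddCommGroup A] (b : A) :
    ∃ j : ZMod (addOrderOf b) →+ A, Injective j :=
  ⟨ZMod.lift _ ⟨zmultiplesHom A b, by simp [addOrderOf_nsmul_eq_zero]⟩,
    (ZMod.lift_injective _).mpr fun m hm =>
      (ZMod.intCast_zmod_eq_zero_iff_dvd m _).mpr (addOrderOf_dvd_iff_zsmul_eq_zero.mpr hm)⟩

open Cardinal in
/-- If `A` is a non-slender abelian group of cardinality less than the continuum, then
`Hom(∏_{n ∈ ℕ} ℤ, A)` has cardinality exactly `2 ^ (2 ^ ℵ₀)`. -/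
theorem stmt_8 (A : Type) [AddCommGroup A] (hA : ¬ Slender A)
    (hcard : #A < 2 ^ aleph0) :
    #((ℕ → ℤ) →+ A) = (2 : Cardinal) ^ ((2 : Cardinal) ^ aleph0) := by
  rw [two_power_aleph0] at hcard ⊢
  refine le_antisymm (cardinalMk_addMonoidHom_le hcard.le) ?_
  by_cases htf : IsAddTorsionFree A
  · obtain ⟨a, ha, ha0⟩ := exists_mem_divisibleSubgroup_ne_zero_of_not_slender hA hcard
    obtain ⟨j, hj⟩ := exists_injective_rat_addMonoidHom ha ha0
    exact two_pow_continuum_le_cardinalMk_addMonoidHom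
      (mk_le_aleph0.trans_lt aleph0_lt_continuum) hj
  · obtain ⟨p, hp, b, rfl⟩ := exists_addOrderOf_eq_prime htf
    have : Fact (addOrderOf b).Prime := ⟨hp⟩
    obtain ⟨j, hj⟩ := exists_injective_zmod_addOrderOf b
    exact two_pow_continuum_le_cardinalMk_addMonoidHom
      ((lt_aleph0_of_finite _).trans aleph0_lt_continuum) hj
end

section
/- If G is a group of cardinality less than 2^ℵ₀, then G is noncommutatively slender if and only if G is residually noncommutatively slender (i.e., for every nontrivial g ∈ G there is a homomorphism ψ from G to some noncommutatively slender group H with ψ(g) ≠ 1). -/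
open CategoryTheory
open scoped FundamentalGroupoid

noncomputable section

/-- The homomorphism of fundamental groups induced by a continuous map. -/
def FundamentalGroup.inducedHom {X Y : Type} [TopologicalSpace X] [TopologicalSpace Y]
    (f : C(X, Y)) (x : X) :
    FundamentalGroup X x →* FundamentalGroup Y (f x) :=
  CategoryTheory.Functor.mapEnd (⟨x⟩ : FundamentalGroupoid X)
    ((πₘ (show TopCat.of X ⟶ TopCat.of Y from TopCat.ofHom f)) :
      FundamentalGroupoid X ⥤ FundamentalGroupoid Y)

/-- The `n`-th circle of the Hawaiian earring: the circle in the plane of radius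
`1/(n+1)` centered at `(1/(n+1), 0)`. -/
def heCircle (n : ℕ) : Set (ℝ × ℝ) :=
  {p | (p.1 - 1 / (n + 1)) ^ 2 + p.2 ^ 2 = (1 / (n + 1)) ^ 2}

/-- The Hawaiian earring: the union of the circles of radius `1/(n+1)` centered at
`(1/(n+1), 0)` for `n ∈ ℕ`. -/
def heSpace : Set (ℝ × ℝ) := ⋃ n : ℕ, heCircle n

theorem origin_mem_heCircle (n : ℕ) : ((0, 0) : ℝ × ℝ) ∈ heCircle n := by
  simp [heCircle]

theorem origin_mem_heSpace : ((0, 0) : ℝ × ℝ) ∈ heSpace :=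
  Set.mem_iUnion.mpr ⟨0, origin_mem_heCircle 0⟩

/-- The basepoint of the Hawaiian earring. -/
def heBase : heSpace := ⟨(0, 0), origin_mem_heSpace⟩

/-- The Hawaiian earring group: the fundamental group of the Hawaiian earring at the
wedge point. -/
def HEG : Type := FundamentalGroup heSpace heBase

noncomputable instance : Group HEG :=
  inferInstanceAs (Group (FundamentalGroup heSpace heBase))

/-- The union of the circles of index `≥ n`. -/
def heTailSet (n : ℕ) : Set (ℝ × ℝ) := ⋃ k : ℕ, heCircle (n + k)

theorem heTailSet_subset (n : ℕ) : heTailSet n ⊆ heSpace := by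
  intro p hp
  rcases Set.mem_iUnion.mp hp with ⟨k, hk⟩
  exact Set.mem_iUnion.mpr ⟨n + k, hk⟩

theorem origin_mem_heTailSet (n : ℕ) : ((0, 0) : ℝ × ℝ) ∈ heTailSet n :=
  Set.mem_iUnion.mpr ⟨0, origin_mem_heCircle (n + 0)⟩

/-- The tail subgroup `𝕳^n` of the Hawaiian earring group: the image of the fundamental
group of the union of the circles of index `≥ n` under the inclusion. -/
def heTailSubgroup (n : ℕ) : Subgroup HEG :=
  MonoidHom.range
    (FundamentalGroup.inducedHom
      (⟨Set.inclusion (heTailSet_subset n), continuous_inclusion (heTailSet_subset n)⟩ :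
        C(heTailSet n, heSpace))
      ⟨(0, 0), origin_mem_heTailSet n⟩)

/-- A group `G` is noncommutatively slender if every homomorphism from the Hawaiian
earring group to `G` kills some tail subgroup `𝕳^n`. -/
def NSlender (G : Type) [Group G] : Prop :=
  ∀ φ : HEG →* G, ∃ n : ℕ, ∀ g ∈ heTailSubgroup n, φ g = 1

/-
Let `φ : 𝕳 → G` kill no tail `𝕳^n`. If the descending chain `φ(𝕳^n)` stabilises from some `N` on,
then for `g ∈ 𝕳^N` with `φ g ≠ 1` the element `φ g` lies in every `φ(𝕳^n)`, and a map `ψ` from `G`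
to a noncommutatively slender group with `ψ (φ g) ≠ 1` contradicts slenderness applied to `ψ ∘ φ`.
If the chain does not stabilise, there are loops `P n` in ever deeper tails `𝕳^(a n)` with
`φ [P n] ∉ φ(𝕳^(a n + 1))`. For `x : ℕ → Bool` the infinite concatenation of the loops
`P (2k + x k)` is again a loop in the earring, and these loops have pairwise distinct images under
`φ`: after cancelling the common prefix, the first loop where two sequences differ would lie in the
image of a deeper tail. Hence `2 ^ ℵ₀ ≤ #G`.
-/

open Filter Topology unitInterval Cardinal

theorem exists_lt_one_sub_half_pow {s : ℝ} (hs : s < 1) : ∃ n : ℕ, s < 1 - (1 / 2) ^ n := by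
  obtain ⟨n, hn⟩ := exists_pow_lt_of_lt_one (sub_pos.2 hs) (by norm_num : (1 / 2 : ℝ) < 1)
  exact ⟨n, by linarith⟩

namespace Path

variable {X : Type*} [TopologicalSpace X] {x : X}

/-- `finConcat n δ` runs through `δ k` on `[1 - 2⁻ᵏ, 1 - 2⁻ᵏ⁻¹]` for `k < n` and rests at `x`
on `[1 - 2⁻ⁿ, 1]`; `infConcat` is the limit `n → ∞`, continuous at `1` because the loops shrink. -/
def finConcat : ℕ → (ℕ → Path x x) → Path x x
  | 0, _ => Path.refl x
  | n + 1, δ => (δ 0).trans (finConcat n fun k => δ (k + 1))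

theorem finConcat_succ (n : ℕ) (δ : ℕ → Path x x) :
    finConcat (n + 1) δ = (δ 0).trans (finConcat n fun k => δ (k + 1)) := rfl

theorem finConcat_succ_apply_of_le {n : ℕ} {δ : ℕ → Path x x} {t : I}
    (ht : (t : ℝ) ≤ 1 - (1 / 2) ^ n) : finConcat (n + 1) δ t = finConcat n δ t := by
  induction n generalizing δ t with
  | zero =>
    obtain rfl : t = 0 := Subtype.ext (le_antisymm (by simpa using ht) t.2.1)
    simp only [Path.source]
  | succ n ih =>
    rw [finConcat_succ (n + 1) δ, finConcat_succ n δ, trans_apply, trans_apply]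
    split_ifs
    · rfl
    · apply ih
      simp only
      linarith [pow_succ (1 / 2 : ℝ) n]

theorem finConcat_apply_eq_of_le {m n : ℕ} (hnm : n ≤ m) {δ : ℕ → Path x x} {t : I}
    (ht : (t : ℝ) ≤ 1 - (1 / 2) ^ n) : finConcat m δ t = finConcat n δ t := by
  induction m, hnm using Nat.le_induction with
  | base => rfl
  | succ m hnm ih =>
    rw [finConcat_succ_apply_of_le, ih]
    linarith [pow_le_pow_of_le_one (by norm_num : (0 : ℝ) ≤ 1 / 2) (by norm_num) hnm]

theorem finConcat_congr {m : ℕ} {δ δ' : ℕ → Path x x} (h : ∀ i < m, δ i = δ' i) :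
    finConcat m δ = finConcat m δ' := by
  induction m generalizing δ δ' with
  | zero => rfl
  | succ m ih =>
    rw [finConcat_succ, finConcat_succ, h 0 m.succ_pos,
      ih fun i hi => h (i + 1) (Nat.succ_lt_succ hi)]

theorem finConcat_apply_mem {S : Set X} (hx : x ∈ S) {δ : ℕ → Path x x} (hδ : ∀ k t, δ k t ∈ S)
    (n : ℕ) (t : I) : finConcat n δ t ∈ S := by
  induction n generalizing δ t with
  | zero => exact hx
  | succ n ih =>
    rw [finConcat_succ, trans_apply]
    split_ifs
    · exact hδ 0 _
    · exact ih (fun k => hδ (k + 1)) _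

theorem finConcat_apply_mem_of_lt {S : Set X} (hx : x ∈ S) {n : ℕ} {δ : ℕ → Path x x}
    (hδ : ∀ k ≥ n, ∀ t, δ k t ∈ S) (m : ℕ) {t : I} (ht : 1 - (1 / 2) ^ n < (t : ℝ)) :
    finConcat m δ t ∈ S := by
  induction n generalizing m δ t with
  | zero => exact finConcat_apply_mem hx (fun k => hδ k k.zero_le) m t
  | succ n ih =>
    cases m with
    | zero => exact hx
    | succ m =>
      have ht' : 1 / 2 < (t : ℝ) := by
        linarith [pow_le_of_le_one (by norm_num : (0 : ℝ) ≤ 1 / 2) (by norm_num)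
          (by omega : n + 1 ≠ 0)]
      rw [finConcat_succ, trans_apply, dif_neg ht'.not_ge]
      refine ih (fun k hk => hδ (k + 1) (by omega)) m ?_
      simp only
      linarith [pow_succ (1 / 2 : ℝ) n]

def Shrinking (δ : ℕ → Path x x) : Prop :=
  ∀ U ∈ 𝓝 x, ∀ᶠ k in atTop, ∀ t, δ k t ∈ U

theorem Shrinking.comp_tendsto {δ : ℕ → Path x x} (hδ : Shrinking δ) {f : ℕ → ℕ}
    (hf : Tendsto f atTop atTop) : Shrinking (δ ∘ f) :=
  fun U hU => hf.eventually (hδ U hU)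

open scoped Classical in
def infConcatFun (δ : ℕ → Path x x) (t : I) : X :=
  if h : ∃ n : ℕ, (t : ℝ) ≤ 1 - (1 / 2) ^ n then finConcat (Nat.find h) δ t else x

variable {δ : ℕ → Path x x}

theorem infConcatFun_eq_finConcat {n : ℕ} {t : I} (ht : (t : ℝ) ≤ 1 - (1 / 2) ^ n) :
    infConcatFun δ t = finConcat n δ t := by
  have h : ∃ n : ℕ, (t : ℝ) ≤ 1 - (1 / 2) ^ n := ⟨n, ht⟩
  rw [infConcatFun, dif_pos h, finConcat_apply_eq_of_le (Nat.find_min' h ht) (Nat.find_spec h)]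

theorem infConcatFun_one : infConcatFun δ 1 = x := by
  rw [infConcatFun, dif_neg]
  rintro ⟨n, hn⟩
  linarith [pow_pos (by norm_num : (0 : ℝ) < 1 / 2) n, show ((1 : I) : ℝ) = 1 from rfl]

theorem infConcatFun_apply_mem_of_lt {S : Set X} (hx : x ∈ S) {n : ℕ}
    (hδ : ∀ k ≥ n, ∀ t, δ k t ∈ S) {t : I} (ht : 1 - (1 / 2) ^ n < (t : ℝ)) :
    infConcatFun δ t ∈ S := by
  rcases t.2.2.eq_or_lt with h1 | h1
  · rw [show t = 1 from Subtype.ext h1, infConcatFun_one]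
    exact hx
  · obtain ⟨m, hm⟩ := exists_lt_one_sub_half_pow h1
    rw [infConcatFun_eq_finConcat hm.le]
    exact finConcat_apply_mem_of_lt hx hδ m ht

theorem continuous_infConcatFun (hδ : Shrinking δ) : Continuous (infConcatFun δ) := by
  refine continuous_iff_continuousAt.2 fun t => ?_
  rcases t.2.2.eq_or_lt with h1 | h1
  · obtain rfl : t = 1 := Subtype.ext h1
    intro U hU
    rw [infConcatFun_one] at hU
    obtain ⟨N, hN⟩ := eventually_atTop.1 (hδ U hU)
    have hnear : ∀ᶠ s : I in 𝓝 1, 1 - (1 / 2) ^ N < (s : ℝ) :=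
      continuous_subtype_val.continuousAt.eventually
        (lt_mem_nhds (by simp [pow_pos] : 1 - (1 / 2 : ℝ) ^ N < (1 : I)))
    exact hnear.mono fun s hs => infConcatFun_apply_mem_of_lt (mem_of_mem_nhds hU) hN hs
  · obtain ⟨n, hn⟩ := exists_lt_one_sub_half_pow h1
    have hnear : infConcatFun δ =ᶠ[𝓝 t] finConcat n δ :=
      (continuous_subtype_val.continuousAt.eventually (gt_mem_nhds hn)).mono
        fun s hs => infConcatFun_eq_finConcat hs.le
    exact (finConcat n δ).continuous.continuousAt.congr hnear.symm

def infConcat (δ : ℕ → Path x x) (hδ : Shrinking δ) : Path x x where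
  toFun := infConcatFun δ
  continuous_toFun := continuous_infConcatFun hδ
  source' := infConcatFun_eq_finConcat (n := 0) (by simp)
  target' := infConcatFun_one

theorem infConcat_apply (hδ : Shrinking δ) (t : I) : infConcat δ hδ t = infConcatFun δ t := rfl

theorem infConcat_apply_mem {S : Set X} (hx : x ∈ S) (hδ : Shrinking δ) (hS : ∀ k t, δ k t ∈ S)
    (t : I) : infConcat δ hδ t ∈ S := by
  rcases t.2.2.eq_or_lt with h1 | h1
  · rw [show t = 1 from Subtype.ext h1, Path.target]
    exact hx
  · obtain ⟨m, hm⟩ := exists_lt_one_sub_half_pow h1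
    rw [infConcat_apply, infConcatFun_eq_finConcat hm.le]
    exact finConcat_apply_mem hx hS m t

theorem infConcat_eq_trans (hδ : Shrinking δ) :
    infConcat δ hδ =
      (δ 0).trans (infConcat (fun k => δ (k + 1)) (hδ.comp_tendsto (tendsto_add_atTop_nat 1))) := by
  ext t
  rw [trans_apply, infConcat_apply]
  split_ifs with h
  · rw [infConcatFun_eq_finConcat (n := 1) (by linarith), finConcat_succ, trans_apply, dif_pos h]
  · rcases t.2.2.eq_or_lt with h1 | h1
    · obtain rfl : t = 1 := Subtype.ext h1
      rw [infConcatFun_one, eq_comm]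
      convert Path.target _
      norm_num
    · obtain ⟨n, hn⟩ := exists_lt_one_sub_half_pow (show 2 * (t : ℝ) - 1 < 1 by linarith)
      rw [infConcatFun_eq_finConcat (n := n + 1) (by linarith [pow_succ (1 / 2 : ℝ) n]),
        finConcat_succ, trans_apply, dif_neg h, infConcat_apply, infConcatFun_eq_finConcat hn.le]

end Path

namespace FundamentalGroup

variable {X : Type*} [TopologicalSpace X] {x : X}

def ofLoop (p : Path x x) : FundamentalGroup X x := fromPath (.mk p)

theorem ofLoop_trans (p q : Path x x) : ofLoop (p.trans q) = ofLoop q * ofLoop p := rfl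

theorem ofLoop_surjective : Function.Surjective (ofLoop (x := x)) :=
  Path.Homotopic.Quotient.mk_surjective

theorem ofLoop_finConcat_one (δ : ℕ → Path x x) :
    ofLoop (Path.finConcat 1 δ) = ofLoop (δ 0) := by
  rw [Path.finConcat_succ, ofLoop_trans]
  exact one_mul _

theorem ofLoop_infConcat {δ : ℕ → Path x x} (hδ : Path.Shrinking δ) (m : ℕ) :
    ofLoop (Path.infConcat δ hδ) =
      ofLoop (Path.infConcat (fun k => δ (k + m)) (hδ.comp_tendsto (tendsto_add_atTop_nat m))) *
        ofLoop (Path.finConcat m δ) := by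
  induction m generalizing δ with
  | zero => exact (mul_one _).symm
  | succ m ih =>
    rw [Path.infConcat_eq_trans, ofLoop_trans, ih, Path.finConcat_succ, ofLoop_trans, mul_assoc]
    rfl

end FundamentalGroup

open FundamentalGroup

theorem heTailSet_antitone : Antitone heTailSet := by
  intro m n hmn p hp
  obtain ⟨k, hk⟩ := Set.mem_iUnion.1 hp
  exact Set.mem_iUnion.2 ⟨n - m + k, by rwa [← Nat.add_assoc, Nat.add_sub_cancel' hmn]⟩

theorem heTailSet_subset_closedBall (n : ℕ) : heTailSet n ⊆ Metric.closedBall 0 (2 / (n + 1)) := by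
  intro p hp
  obtain ⟨k, hk⟩ := Set.mem_iUnion.1 hp
  set r : ℝ := 1 / (((n + k : ℕ) : ℝ) + 1)
  have hcirc : (p.1 - r) ^ 2 + p.2 ^ 2 = r ^ 2 := hk
  have hr : 2 * r ≤ 2 / (n + 1) := by
    rw [← mul_one_div]
    gcongr 2 * ?_
    exact one_div_le_one_div_of_le (by positivity) (by push_cast; linarith [k.cast_nonneg (α := ℝ)])
  have hr0 : 0 < r := by positivity
  have h1 : |p.1| ≤ 2 * r := abs_le.2 ⟨by nlinarith [sq_nonneg p.2], by nlinarith [sq_nonneg p.2]⟩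
  have h2 : |p.2| ≤ 2 * r :=
    abs_le.2 ⟨by nlinarith [sq_nonneg (p.1 - r)], by nlinarith [sq_nonneg (p.1 - r)]⟩
  rw [mem_closedBall_zero_iff, Prod.norm_def, Real.norm_eq_abs, Real.norm_eq_abs]
  exact max_le (h1.trans hr) (h2.trans hr)

theorem shrinking_of_mem_heTailSet {a : ℕ → ℕ} (ha : Tendsto a atTop atTop)
    {δ : ℕ → Path heBase heBase} (hδ : ∀ k t, (δ k t : ℝ × ℝ) ∈ heTailSet (a k)) :
    Path.Shrinking δ := by
  intro U hU
  obtain ⟨ε, hε, hball⟩ := Metric.mem_nhds_iff.1 hU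
  obtain ⟨N, hN⟩ := exists_nat_gt (2 / ε)
  filter_upwards [ha.eventually_ge_atTop N] with k hk t
  apply hball
  have hN' : 2 < ε * (N + 1) := by
    rw [div_lt_iff₀ hε] at hN
    linarith
  calc dist (δ k t) heBase = dist (δ k t : ℝ × ℝ) 0 := rfl
    _ ≤ 2 / (a k + 1) := Metric.mem_closedBall.1 (heTailSet_subset_closedBall (a k) (hδ k t))
    _ ≤ 2 / (N + 1) := by gcongr
    _ < ε := by rwa [div_lt_iff₀ (by positivity)]

theorem ofLoop_mem_heTailSubgroup {n : ℕ} {p : Path heBase heBase}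
    (hp : ∀ t, (p t : ℝ × ℝ) ∈ heTailSet n) : ofLoop p ∈ heTailSubgroup n := by
  let q : Path (⟨(0, 0), origin_mem_heTailSet n⟩ : heTailSet n) ⟨(0, 0), origin_mem_heTailSet n⟩ :=
    { toFun := fun t => ⟨p t, hp t⟩
      continuous_toFun := (continuous_subtype_val.comp p.continuous).subtype_mk _
      source' := Subtype.ext (congrArg (Subtype.val : heSpace → ℝ × ℝ) p.source)
      target' := Subtype.ext (congrArg (Subtype.val : heSpace → ℝ × ℝ) p.target) }
  exact ⟨ofLoop q, rfl⟩

theorem exists_ofLoop_eq_of_mem_heTailSubgroup {n : ℕ} {g : HEG} (hg : g ∈ heTailSubgroup n) :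
    ∃ p : Path heBase heBase, (∀ t, (p t : ℝ × ℝ) ∈ heTailSet n) ∧ ofLoop p = g := by
  obtain ⟨c, rfl⟩ := hg
  obtain ⟨q, rfl⟩ := ofLoop_surjective c
  exact ⟨q.map (continuous_inclusion (heTailSet_subset n)), fun t => (q t).2, rfl⟩

theorem heTailSubgroup_antitone : Antitone heTailSubgroup := by
  intro m n hmn g hg
  obtain ⟨p, hp, rfl⟩ := exists_ofLoop_eq_of_mem_heTailSubgroup hg
  exact ofLoop_mem_heTailSubgroup fun t => heTailSet_antitone hmn (hp t)

def bitIndex (x : ℕ → Bool) (k : ℕ) : ℕ := 2 * k + (x k).toNat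

theorem strictMono_bitIndex (x : ℕ → Bool) : StrictMono (bitIndex x) :=
  strictMono_nat_of_lt_succ fun k => by
    simp only [bitIndex]
    have := (x k).toNat_le
    omega

theorem bitIndex_ne {x y : ℕ → Bool} {k : ℕ} (h : x k ≠ y k) : bitIndex x k ≠ bitIndex y k := by
  simp only [bitIndex]
  revert h
  cases x k <;> cases y k <;> simp

section Separation

variable {G : Type*} [Group G] (φ : HEG →* G) {a : ℕ → ℕ} {P : ℕ → Path heBase heBase}

theorem map_ofLoop_infConcat {δ : ℕ → Path heBase heBase} (hδ : Path.Shrinking δ) (m : ℕ) :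
    φ (ofLoop (Path.infConcat δ hδ)) =
      φ (ofLoop (Path.infConcat (fun k => δ (k + m)) (hδ.comp_tendsto (tendsto_add_atTop_nat m)))) *
        φ (ofLoop (Path.finConcat m δ)) := by
  rw [ofLoop_infConcat hδ m]
  exact map_mul φ _ _

theorem map_ofLoop_infConcat_ne_of_lt (ha : StrictMono a)
    (hP : ∀ n t, (P n t : ℝ × ℝ) ∈ heTailSet (a n))
    (hsep : ∀ n, φ (ofLoop (P n)) ∉ (heTailSubgroup (a n + 1)).map φ)
    {f g : ℕ → ℕ} (hf : StrictMono f) (hg : StrictMono g) (hfg : f 0 < g 0)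
    (hPf : Path.Shrinking (P ∘ f)) (hPg : Path.Shrinking (P ∘ g)) :
    φ (ofLoop (Path.infConcat (P ∘ f) hPf)) ≠ φ (ofLoop (Path.infConcat (P ∘ g) hPg)) := by
  -- every factor of the two products except `φ [P (f 0)]` lies in the image `K` of a deeper tail
  set K := (heTailSubgroup (a (f 0) + 1)).map φ
  have hmem : ∀ (h : ℕ → ℕ) (hPh : Path.Shrinking (P ∘ h)), (∀ k, f 0 < h k) →
      φ (ofLoop (Path.infConcat (P ∘ h) hPh)) ∈ K := fun h hPh hlt =>
    Subgroup.mem_map_of_mem φ <| ofLoop_mem_heTailSubgroup <|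
      Path.infConcat_apply_mem (S := Subtype.val ⁻¹' heTailSet (a (f 0) + 1))
        (origin_mem_heTailSet _) hPh
        fun k t => heTailSet_antitone (ha (hlt k)) (hP (h k) t)
  have hf1 := hmem (fun k => f (k + 1)) (hPf.comp_tendsto (tendsto_add_atTop_nat 1))
    fun k => hf k.succ_pos
  have hg1 := hmem (fun k => g (k + 1)) (hPg.comp_tendsto (tendsto_add_atTop_nat 1))
    fun k => hfg.trans (hg k.succ_pos)
  have hg0 : φ (ofLoop (P (g 0))) ∈ K := Subgroup.mem_map_of_mem φ <|
    ofLoop_mem_heTailSubgroup fun t => heTailSet_antitone (ha hfg) (hP (g 0) t)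
  intro h
  rw [map_ofLoop_infConcat φ hPf 1, map_ofLoop_infConcat φ hPg 1, ofLoop_finConcat_one,
    ofLoop_finConcat_one] at h
  refine hsep (f 0) ?_
  rw [show φ (ofLoop (P (f 0))) = _ from eq_inv_mul_of_mul_eq h]
  exact K.mul_mem (K.inv_mem hf1) (K.mul_mem hg1 hg0)

theorem map_ofLoop_infConcat_ne_of_eqOn_of_lt (ha : StrictMono a)
    (hP : ∀ n t, (P n t : ℝ × ℝ) ∈ heTailSet (a n))
    (hsep : ∀ n, φ (ofLoop (P n)) ∉ (heTailSubgroup (a n + 1)).map φ)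
    {f g : ℕ → ℕ} (hf : StrictMono f) (hg : StrictMono g) {m : ℕ} (heq : ∀ i < m, f i = g i)
    (hlt : f m < g m) (hPf : Path.Shrinking (P ∘ f)) (hPg : Path.Shrinking (P ∘ g)) :
    φ (ofLoop (Path.infConcat (P ∘ f) hPf)) ≠ φ (ofLoop (Path.infConcat (P ∘ g) hPg)) := by
  rw [map_ofLoop_infConcat φ hPf m, map_ofLoop_infConcat φ hPg m,
    Path.finConcat_congr (δ := P ∘ f) (δ' := P ∘ g) fun i hi => congrArg P (heq i hi), Ne,
    mul_left_inj]
  exact map_ofLoop_infConcat_ne_of_lt φ ha hP hsep (f := fun k => f (k + m))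
    (g := fun k => g (k + m)) (fun i j hij => hf (by omega)) (fun i j hij => hg (by omega))
    (by simpa using hlt) _ _

end Separation

theorem continuum_le_mk_of_separating {G : Type} [Group G] (φ : HEG →* G) {a : ℕ → ℕ}
    (ha : StrictMono a) {P : ℕ → Path heBase heBase}
    (hP : ∀ n t, (P n t : ℝ × ℝ) ∈ heTailSet (a n))
    (hsep : ∀ n, φ (ofLoop (P n)) ∉ (heTailSubgroup (a n + 1)).map φ) :
    2 ^ ℵ₀ ≤ #G := by
  have hPs : Path.Shrinking P := shrinking_of_mem_heTailSet ha.tendsto_atTop hP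
  let Θ : (ℕ → Bool) → G := fun x =>
    φ (ofLoop (Path.infConcat _ (hPs.comp_tendsto (strictMono_bitIndex x).tendsto_atTop)))
  have hΘ : Function.Injective Θ := by
    intro x y hxy
    by_contra hne
    have hex : ∃ k, x k ≠ y k := Function.ne_iff.1 hne
    have heq : ∀ i < Nat.find hex, bitIndex x i = bitIndex y i := fun i hi => by
      rw [bitIndex, bitIndex, not_not.1 (Nat.find_min hex hi)]
    rcases (bitIndex_ne (Nat.find_spec hex)).lt_or_gt with hlt | hlt
    · exact map_ofLoop_infConcat_ne_of_eqOn_of_lt φ ha hP hsep (strictMono_bitIndex x)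
        (strictMono_bitIndex y) heq hlt _ _ hxy
    · exact map_ofLoop_infConcat_ne_of_eqOn_of_lt φ ha hP hsep (strictMono_bitIndex y)
        (strictMono_bitIndex x) (fun i hi => (heq i hi).symm) hlt _ _ hxy.symm
  calc (2 : Cardinal) ^ ℵ₀ = #(ℕ → Bool) := by simp
    _ ≤ #G := Cardinal.mk_le_of_injective hΘ

theorem eventually_map_heTailSubgroup_le {G : Type} [Group G] (hcard : #G < 2 ^ ℵ₀)
    (φ : HEG →* G) :
    ∀ᶠ n in atTop, (heTailSubgroup n).map φ ≤ (heTailSubgroup (n + 1)).map φ := by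
  set drop : ℕ → Prop := fun n => ¬(heTailSubgroup n).map φ ≤ (heTailSubgroup (n + 1)).map φ
  by_contra h
  have hinf := Nat.frequently_atTop_iff_infinite.1 (not_eventually.1 h)
  have hsep : ∀ n, ∃ p : Path heBase heBase,
      (∀ t, (p t : ℝ × ℝ) ∈ heTailSet (Nat.nth drop n)) ∧
        φ (ofLoop p) ∉ (heTailSubgroup (Nat.nth drop n + 1)).map φ := by
    intro n
    obtain ⟨_, ⟨g, hg, rfl⟩, hgφ⟩ := SetLike.not_le_iff_exists.1 (Nat.nth_mem_of_infinite hinf n)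
    obtain ⟨p, hp, rfl⟩ := exists_ofLoop_eq_of_mem_heTailSubgroup hg
    exact ⟨p, hp, hgφ⟩
  choose P hP hPsep using hsep
  exact (continuum_le_mk_of_separating φ (Nat.nth_strictMono hinf) hP hPsep).not_gt hcard

theorem exists_map_heTailSubgroup_le {G : Type} [Group G] (hcard : #G < 2 ^ ℵ₀) (φ : HEG →* G) :
    ∃ N, ∀ n, (heTailSubgroup N).map φ ≤ (heTailSubgroup n).map φ := by
  obtain ⟨N, hN⟩ := eventually_atTop.1 (eventually_map_heTailSubgroup_le hcard φ)
  refine ⟨N, fun n => ?_⟩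
  rcases le_total n N with hnN | hNn
  · exact Subgroup.map_mono (heTailSubgroup_antitone hnN)
  · induction n, hNn using Nat.le_induction with
    | base => exact le_rfl
    | succ n hNn ih => exact ih.trans (hN n hNn)

open Cardinal in
/-- A group of cardinality less than the continuum is noncommutatively slender if and
only if it is residually noncommutatively slender. -/
theorem stmt_14 (G : Type) [Group G] (hcard : #G < 2 ^ aleph0) :
    NSlender G ↔
      ∀ g : G, g ≠ 1 →
        ∃ (H : Type) (_ : Group H), NSlender H ∧ ∃ ψ : G →* H, ψ g ≠ 1 := by
  refine ⟨fun hG g hg => ⟨G, _, hG, MonoidHom.id G, hg⟩, fun hres φ => ?_⟩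
  obtain ⟨N, hN⟩ := exists_map_heTailSubgroup_le hcard φ
  by_contra hφ
  push Not at hφ
  obtain ⟨g, hg, hφg⟩ := hφ N
  obtain ⟨H, _, hH, ψ, hψ⟩ := hres (φ g) hφg
  obtain ⟨n, hn⟩ := hH (ψ.comp φ)
  obtain ⟨y, hy, hyg⟩ := hN n ⟨g, hg, rfl⟩
  exact hψ (hyg ▸ hn y hy)

end
end
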